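/- arXiv:1302.2675 — 2 statements merged into one kernel-verified Lean document; each statement's English description precedes it below -/
import Mathlib

section
/- If the labeling λ^k is legal, then the k-retrospective ranking r^k is an odd ranking: every infinite path of G eventually gets trapped in an odd rank. -/
/-- Strict lexicographic order on finite 0-1 profiles. -/
def ProfLt (a b : List Bool) : Prop := List.Lex (· < ·) a b

/-- Non-strict lexicographic order on finite 0-1 profiles. -/
def ProfLe (a b : List Bool) : Prop := a = b ∨ ProfLt a b

/-- A nondeterministic Büchi automaton on infinite words. -/
structure NBW (Q : Type) (σ : Type) where
  init : Set Q
  trans : Q → σ → Set Q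
  acc : Q → Bool

namespace NBW

variable {Q σ : Type} (A : NBW Q σ) (w : ℕ → σ)

/-- `(q,i)` is a vertex of the run DAG of `A` on `w`. -/
def InDag (v : Q × ℕ) : Prop :=
  ∃ p : ℕ → Q, p 0 ∈ A.init ∧ (∀ j, j < v.2 → p (j + 1) ∈ A.trans (p j) (w j)) ∧ p v.2 = v.1

/-- Edge of the run DAG. -/
def Edge (u v : Q × ℕ) : Prop :=
  A.InDag w u ∧ v.2 = u.2 + 1 ∧ v.1 ∈ A.trans u.1 (w u.2)

/-- An infinite initial path through the (sub-)DAG with edge relation `E`. -/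
def IsPath (E : Q × ℕ → Q × ℕ → Prop) (π : ℕ → Q × ℕ) : Prop :=
  (π 0).1 ∈ A.init ∧ (π 0).2 = 0 ∧ ∀ i, E (π i) (π (i + 1))

/-- An accepting path: initial and visiting F-nodes infinitely often. -/
def AcceptingPath (E : Q × ℕ → Q × ℕ → Prop) (π : ℕ → Q × ℕ) : Prop :=
  A.IsPath E π ∧ ∀ N, ∃ i, N ≤ i ∧ A.acc (π i).1 = true

/-- Profile (sequence of acceptance labels) of the first `i+1` states of `p`. -/
def profileOf (p : ℕ → Q) (i : ℕ) : List Bool :=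
  (List.range (i + 1)).map fun j => A.acc (p j)

/-- `p` encodes a finite initial run ending at node `v`. -/
def FinRunTo (p : ℕ → Q) (v : Q × ℕ) : Prop :=
  p 0 ∈ A.init ∧ (∀ j, j < v.2 → p (j + 1) ∈ A.trans (p j) (w j)) ∧ p v.2 = v.1

/-- `h` assigns to each node the lexicographically maximal profile
over all finite initial runs to it. -/
def IsProfileFun (h : Q × ℕ → List Bool) : Prop :=
  ∀ v, A.InDag w v →
    (∃ p, A.FinRunTo w p v ∧ A.profileOf p v.2 = h v) ∧
    ∀ p, A.FinRunTo w p v → ProfLe (A.profileOf p v.2) (h v)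

/-- Edges of the pruned DAG `G'`: only edges from predecessors of
lexicographically maximal profile are kept. -/
def Edge' (h : Q × ℕ → List Bool) (u v : Q × ℕ) : Prop :=
  A.Edge w u v ∧ ∀ u', A.Edge w u' v → ¬ ProfLt (h u) (h u')

/-- `v` is finite in `G'`: it has finitely many descendants in `G'`. -/
def FiniteIn' (h : Q × ℕ → List Bool) (v : Q × ℕ) : Prop :=
  Set.Finite {u | Relation.ReflTransGen (A.Edge' w h) v u}

/-- Vertices of `G''`: vertices of the run DAG that are not finite in `G'`. -/
def InDag'' (h : Q × ℕ → List Bool) (v : Q × ℕ) : Prop :=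
  A.InDag w v ∧ ¬ A.FiniteIn' w h v

/-- Edges of `G''`. -/
def Edge'' (h : Q × ℕ → List Bool) (u v : Q × ℕ) : Prop :=
  A.Edge' w h u v ∧ A.InDag'' w h u ∧ A.InDag'' w h v

/-- `lam` is the retrospective labeling `λ^k`: ⊤ at levels ≤ k, ⊥ on F-nodes
after level k, inherited along `G'`-edges otherwise. -/
def IsRetroLabeling (h : Q × ℕ → List Bool) (k : ℕ) (lam : Q × ℕ → Bool) : Prop :=
  (∀ u, A.InDag w u → u.2 ≤ k → lam u = true) ∧
  (∀ u, A.InDag w u → k < u.2 → A.acc u.1 = true → lam u = false) ∧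
  (∀ u v, k < v.2 → A.acc v.1 = false → A.Edge' w h u v → lam v = lam u)

/-- A labeling is legal when every ⊥-labeled node is finite in `G'`. -/
def Legal (h : Q × ℕ → List Bool) (lam : Q × ℕ → Bool) : Prop :=
  ∀ u, A.InDag w u → lam u = false → A.FiniteIn' w h u

/-- `α(u)`: the number of ⊤-labeled profile-equivalence classes on `u`'s level
whose profile is strictly greater than `h u`. -/
noncomputable def alphaCount (h : Q × ℕ → List Bool) (lam : Q × ℕ → Bool) (u : Q × ℕ) : ℕ :=
  Set.ncard {p : List Bool | ∃ v, A.InDag w v ∧ v.2 = u.2 ∧ lam v = true ∧ h v = p ∧ ProfLt (h u) p}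

/-- The `k`-retrospective ranking (with top rank `m`). -/
noncomputable def retroRank (h : Q × ℕ → List Bool) (lam : Q × ℕ → Bool) (k m : ℕ)
    (u : Q × ℕ) : ℕ :=
  if u.2 ≤ k then m
  else if lam u then 2 * A.alphaCount w h lam u + 1 else 2 * A.alphaCount w h lam u

/-- `m = 2 |Q \ F|`. -/
def mBound [Fintype Q] : ℕ :=
  2 * Finset.card (Finset.univ.filter fun q => A.acc q = false)

end NBW

/-! Along an infinite path `π` the profiles `h (π j)` grow lexicographically, so each prefix
of fixed length stabilises, giving a limit profile `L`. At every level, the pigeonhole principle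
yields a node with profile `L i` that is a `G'`-ancestor of infinitely many nodes of `π`; it is
not finite in `G'`, so legality labels it ⊤, and past level `k` a ⊤-node is non-accepting. Hence
`L` has no accepting bit after `k`, which forces `h (π j) = L j` for large `j`; as labels only
depend on profiles, `π` is eventually ⊤-labelled. Finally `α` never increases along an edge past
level `k`: a ⊤-class above the target is non-accepting, so dropping its last bit gives a ⊤-class
above the source. The rank `2 α + 1` is therefore eventually constant and odd. -/

namespace List

variable {α : Type*}

theorem take_le_take_of_lt [LinearOrder α] {l₁ l₂ : List α} (h : l₁ < l₂) (n : ℕ) :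
    l₁.take n ≤ l₂.take n := by
  induction h generalizing n with
  | nil =>
    cases n with
    | zero => exact le_rfl
    | succ n => exact le_of_lt Lex.nil
  | rel hab =>
    cases n with
    | zero => exact le_rfl
    | succ n => exact le_of_lt (Lex.rel hab)
  | cons _ ih =>
    cases n with
    | zero => exact le_rfl
    | succ n => exact cons_le_cons _ (ih n)

theorem take_le_take_of_le [LinearOrder α] {l₁ l₂ : List α} (h : l₁ ≤ l₂) (n : ℕ) :
    l₁.take n ≤ l₂.take n := by
  rcases h.lt_or_eq with h | rfl
  · exact take_le_take_of_lt h n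
  · exact le_rfl

theorem append_lt_append_of_lt_of_length_eq [LT α] {l₁ l₂ : List α} (h : l₁ < l₂)
    (hlen : l₁.length = l₂.length) (t₁ t₂ : List α) : l₁ ++ t₁ < l₂ ++ t₂ := by
  induction h with
  | nil => simp at hlen
  | rel hab => exact Lex.rel hab
  | cons _ ih => exact Lex.cons (ih (by simpa using hlen))

theorem append_le_append_of_le_of_length_eq [LinearOrder α] {l₁ l₂ t₁ t₂ : List α}
    (h : l₁ ≤ l₂) (hlen : l₁.length = l₂.length) (ht : t₁ ≤ t₂) : l₁ ++ t₁ ≤ l₂ ++ t₂ := by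
  rcases h.lt_or_eq with h | rfl
  · exact (append_lt_append_of_lt_of_length_eq h hlen t₁ t₂).le
  · induction l₁ with
    | nil => exact ht
    | cons a l ih => exact cons_le_cons a (ih le_rfl rfl)

theorem eq_of_le_of_take_eq [LinearOrder α] [OrderBot α] {a b : List α} {n : ℕ} (hle : a ≤ b)
    (hlen : a.length = b.length) (htake : a.take n = b.take n)
    (hbot : ∀ i (hi : i < b.length), n ≤ i → b[i] = ⊥) : a = b := by
  rcases List.le_iff_exists.1 (not_lt.2 hle) with h | ⟨i, hia, hib, -, hlt⟩
  · rwa [hlen, take_length] at h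
  · refine absurd (hbot i hib ?_ ▸ hlt) not_lt_bot
    by_contra! hin
    have := congrArg (·[i]?) htake
    simp [hin, hia, hib] at this
    exact hlt.ne this

end List

theorem Monotone.exists_forall_ge_eq_of_finite_range {β : Type*} [PartialOrder β] {f : ℕ → β}
    (hf : Monotone f) (hfin : (Set.range f).Finite) : ∃ n, ∀ m, n ≤ m → f n = f m := by
  have := hfin.to_subtype
  obtain ⟨n, hn⟩ := WellFoundedGT.monotone_chain_condition
    (⟨Set.rangeFactorization f, fun a b hab => hf hab⟩ : ℕ →o Set.range f)
  exact ⟨n, fun m hm => congrArg Subtype.val (hn m hm)⟩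

namespace NBW

variable {Q σ : Type} {A : NBW Q σ} {w : ℕ → σ} {h : Q × ℕ → List Bool}

lemma profLe_iff_le {a b : List Bool} : ProfLe a b ↔ a ≤ b := by
  rw [le_iff_lt_or_eq, ProfLe, or_comm, eq_comm]
  rfl

lemma profileOf_succ (p : ℕ → Q) (n : ℕ) :
    A.profileOf p (n + 1) = A.profileOf p n ++ [A.acc (p (n + 1))] := by
  simp [profileOf, List.range_succ]

lemma length_profileOf (p : ℕ → Q) (n : ℕ) : (A.profileOf p n).length = n + 1 := by
  simp [profileOf]

lemma FinRunTo.extend {p : ℕ → Q} {u v : Q × ℕ} (hp : A.FinRunTo w p u) (he : A.Edge w u v) :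
    A.FinRunTo w (Function.update p v.2 v.1) v ∧
      A.profileOf (Function.update p v.2 v.1) v.2 = A.profileOf p u.2 ++ [A.acc v.1] := by
  obtain ⟨u, n⟩ := u
  obtain ⟨q, m⟩ := v
  obtain ⟨-, rfl : m = n + 1, htr⟩ := he
  obtain ⟨hp0, hpt, hpn⟩ := hp
  refine ⟨⟨by simpa using hp0, fun j hj => ?_, by simp⟩, ?_⟩
  · rcases (Nat.lt_succ_iff.1 hj).lt_or_eq with hj | rfl
    · rw [Function.update_of_ne (by omega), Function.update_of_ne (by omega)]
      exact hpt j hj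
    · simpa [hpn] using htr
  · rw [profileOf_succ, Function.update_self]
    congr 1
    refine List.map_congr_left fun j hj => ?_
    rw [Function.update_of_ne (by simp at hj; omega)]

lemma inDag_of_edge {u v : Q × ℕ} (he : A.Edge w u v) : A.InDag w v :=
  let ⟨p, hp⟩ := he.1
  ⟨_, (FinRunTo.extend (p := p) hp he).1⟩

lemma length_profile (hprof : A.IsProfileFun w h) {v : Q × ℕ} (hv : A.InDag w v) :
    (h v).length = v.2 + 1 := by
  obtain ⟨⟨p, -, hpv⟩, -⟩ := hprof v hv
  rw [← hpv, length_profileOf]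

lemma profile_getElem?_level (hprof : A.IsProfileFun w h) {v : Q × ℕ} (hv : A.InDag w v) :
    (h v)[v.2]? = some (A.acc v.1) := by
  obtain ⟨⟨p, hp, hpv⟩, -⟩ := hprof v hv
  simp [← hpv, profileOf, hp.2.2]

lemma profile_append_le_of_edge (hprof : A.IsProfileFun w h) {u v : Q × ℕ}
    (he : A.Edge w u v) : h u ++ [A.acc v.1] ≤ h v := by
  obtain ⟨⟨p, hp, hpu⟩, -⟩ := hprof u he.1
  obtain ⟨hp', hpv⟩ := hp.extend he
  rw [← hpu, ← hpv, ← profLe_iff_le]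
  exact (hprof v (inDag_of_edge he)).2 _ hp'

lemma exists_edge'_profile_eq [Finite Q] (hprof : A.IsProfileFun w h) {v : Q × ℕ}
    (hv : A.InDag w v) (hlev : 0 < v.2) :
    ∃ u, A.Edge' w h u v ∧ h v = h u ++ [A.acc v.1] := by
  obtain ⟨⟨p, hp, hpv⟩, -⟩ := hprof v hv
  obtain ⟨n, hn⟩ : ∃ n, v.2 = n + 1 := Nat.exists_eq_add_one.2 hlev
  have hrun : A.FinRunTo w p (p n, n) := ⟨hp.1, fun j hj => hp.2.1 j (by omega), rfl⟩
  have hpred : A.Edge w (p n, n) v := by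
    refine ⟨⟨p, hrun⟩, hn, ?_⟩
    have := hp.2.1 n (by omega)
    rwa [← hn, hp.2.2] at this
  have hfin : {u | A.Edge w u v}.Finite :=
    (Set.finite_range fun q : Q => (q, n)).subset fun u hu =>
      ⟨u.1, Prod.ext rfl (by have := hu.2.1; simp; omega)⟩
  obtain ⟨u, hu, hmax⟩ := Set.exists_max_image _ h hfin ⟨_, hpred⟩
  refine ⟨u, ⟨hu, fun u' hu' => not_lt.2 (hmax u' hu')⟩,
    le_antisymm ?_ (profile_append_le_of_edge hprof hu)⟩
  have hle : A.profileOf p n ≤ h u :=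
    (profLe_iff_le.1 ((hprof _ hpred.1).2 p hrun)).trans (hmax _ hpred)
  rw [← hpv, hn, profileOf_succ, show p (n + 1) = v.1 by rw [← hn, hp.2.2]]
  exact List.append_le_append_of_le_of_length_eq hle
    (by rw [length_profileOf, length_profile hprof hu.1]; have := hu.2.1; omega) le_rfl

lemma IsRetroLabeling.acc_eq_false {k : ℕ} {lam : Q × ℕ → Bool}
    (hlam : A.IsRetroLabeling w h k lam) {v : Q × ℕ} (hv : A.InDag w v) (hk : k < v.2)
    (hv_top : lam v = true) : A.acc v.1 = false := by
  by_contra hacc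
  simp [hlam.2.1 v hv hk (by simpa using hacc)] at hv_top

lemma IsRetroLabeling.eq_of_profile_eq [Finite Q] (hprof : A.IsProfileFun w h) {k : ℕ}
    {lam : Q × ℕ → Bool} (hlam : A.IsRetroLabeling w h k lam) {v v' : Q × ℕ}
    (hv : A.InDag w v) (hv' : A.InDag w v') (hlev : v.2 = v'.2) (hh : h v = h v') :
    lam v = lam v' := by
  induction hn : v.2 generalizing v v' with
  | zero => rw [hlam.1 v hv (by omega), hlam.1 v' hv' (by omega)]
  | succ n ih =>
    rcases le_or_gt v.2 k with hk | hk
    · rw [hlam.1 v hv hk, hlam.1 v' hv' (hlev ▸ hk)]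
    have hacc : A.acc v.1 = A.acc v'.1 := by
      have := profile_getElem?_level hprof hv'
      rwa [← hh, ← hlev, profile_getElem?_level hprof hv, Option.some_inj] at this
    cases hv_acc : A.acc v.1
    · obtain ⟨u, hu, hvu⟩ := exists_edge'_profile_eq hprof hv (by omega)
      obtain ⟨u', hu', hvu'⟩ := exists_edge'_profile_eq hprof hv' (by omega)
      have hu_lev : u.2 = n := by have := hu.1.2.1; omega
      have hu'_lev : u'.2 = n := by have := hu'.1.2.1; omega
      have hh_pred : h u = h u' := by
        refine (List.append_inj (hvu ▸ hvu' ▸ hh) ?_).1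
        rw [length_profile hprof hu.1.1, length_profile hprof hu'.1.1, hu_lev, hu'_lev]
      rw [hlam.2.2 u v hk hv_acc hu, hlam.2.2 u' v' (hlev ▸ hk) (hacc ▸ hv_acc) hu']
      exact ih hu.1.1 hu'.1.1 (hu_lev.trans hu'_lev.symm) hh_pred hu_lev
    · rw [hlam.2.1 v hv hk hv_acc, hlam.2.1 v' hv' (hlev ▸ hk) (hacc ▸ hv_acc)]

lemma exists_edge'_ancestor [Finite Q] (hprof : A.IsProfileFun w h) {v : Q × ℕ}
    (hv : A.InDag w v) {i : ℕ} (hi : i ≤ v.2) :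
    ∃ u, A.InDag w u ∧ u.2 = i ∧ h u = (h v).take (i + 1) ∧
      Relation.ReflTransGen (A.Edge' w h) u v := by
  induction hn : v.2 generalizing v with
  | zero =>
    exact ⟨v, hv, by omega,
      (List.take_of_length_le (by rw [length_profile hprof hv]; omega)).symm, .refl⟩
  | succ n ih =>
    rcases hi.lt_or_eq with hi | rfl
    · obtain ⟨u', hu', hvu'⟩ := exists_edge'_profile_eq hprof hv (by omega)
      have hu'_lev : u'.2 = n := by have := hu'.1.2.1; omega
      obtain ⟨u, hu, hu_lev, hu_prof, hu_rtg⟩ := ih hu'.1.1 (by omega) hu'_lev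
      refine ⟨u, hu, hu_lev, ?_, hu_rtg.tail hu'⟩
      rw [hu_prof, hvu', List.take_append_of_le_length
        (by rw [length_profile hprof hu'.1.1]; omega)]
    · exact ⟨v, hv, rfl, (List.take_of_length_le (length_profile hprof hv).le).symm, .refl⟩

/-- `alphaCount` is by definition the `ncard` of this set. -/
def topClassesAbove (A : NBW Q σ) (w : ℕ → σ) (h : Q × ℕ → List Bool) (lam : Q × ℕ → Bool)
    (u : Q × ℕ) : Set (List Bool) :=
  {p | ∃ v, A.InDag w v ∧ v.2 = u.2 ∧ lam v = true ∧ h v = p ∧ ProfLt (h u) p}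

lemma finite_topClassesAbove [Finite Q] (lam : Q × ℕ → Bool) (u : Q × ℕ) :
    (A.topClassesAbove w h lam u).Finite :=
  ((Set.finite_range fun q : Q => (q, u.2)).image h).subset
    fun _ ⟨v, _, hlev, _, hvp, _⟩ => ⟨v, ⟨v.1, by rw [← hlev]⟩, hvp⟩

lemma alphaCount_le_of_edge [Finite Q] (hprof : A.IsProfileFun w h) {k : ℕ}
    {lam : Q × ℕ → Bool} (hlam : A.IsRetroLabeling w h k lam) {u v : Q × ℕ}
    (he : A.Edge w u v) (hk : k < v.2) :
    A.alphaCount w h lam v ≤ A.alphaCount w h lam u := by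
  have key : ∀ p ∈ A.topClassesAbove w h lam v,
      p.dropLast ∈ A.topClassesAbove w h lam u ∧ p = p.dropLast ++ [false] := by
    rintro p ⟨v', hv', hlev, hv'_top, rfl, hlt⟩
    have hv'_acc := hlam.acc_eq_false hv' (hlev ▸ hk) hv'_top
    obtain ⟨u', hu', hv'u'⟩ := exists_edge'_profile_eq hprof hv' (by omega)
    rw [hv'_acc] at hv'u'
    have hu'_lev : u'.2 = u.2 := by have := hu'.1.2.1; have := he.2.1; omega
    have hlen : (h u').length = (h u).length := by
      rw [length_profile hprof hu'.1.1, length_profile hprof he.1, hu'_lev]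
    have hu_lt : h u < h u' := by
      by_contra! hle
      have hbit : [false] ≤ [A.acc v.1] := by
        cases A.acc v.1
        exacts [le_rfl, le_of_lt (List.Lex.rel Bool.false_lt_true)]
      have := (List.append_le_append_of_le_of_length_eq hle hlen hbit).trans
        (profile_append_le_of_edge hprof he)
      exact (hv'u' ▸ hlt : h v < h u' ++ [false]).not_ge this
    rw [hv'u', List.dropLast_concat]
    refine ⟨⟨u', hu'.1.1, hu'_lev, ?_, rfl, hu_lt⟩, rfl⟩
    rwa [← hlam.2.2 u' v' (hlev ▸ hk) hv'_acc hu']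
  refine Set.ncard_le_ncard_of_injOn List.dropLast (fun p hp => (key p hp).1)
    (fun p hp p' hp' hpp' => ?_) (finite_topClassesAbove lam u)
  rw [(key p hp).2, (key p' hp').2, hpp']

section Path

open Filter

variable {π : ℕ → Q × ℕ}

lemma IsPath.level (hπ : A.IsPath (A.Edge w) π) (i : ℕ) : (π i).2 = i := by
  induction i with
  | zero => exact hπ.2.1
  | succ i ih => rw [(hπ.2.2 i).2.1, ih]

lemma IsPath.inDag (hπ : A.IsPath (A.Edge w) π) (i : ℕ) : A.InDag w (π i) := (hπ.2.2 i).1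

lemma IsPath.injective (hπ : A.IsPath (A.Edge w) π) : Function.Injective π := fun a b hab => by
  simpa [hπ.level] using congrArg Prod.snd hab

lemma IsPath.profile_le_take (hprof : A.IsProfileFun w h) (hπ : A.IsPath (A.Edge w) π)
    {a b : ℕ} (hab : a ≤ b) : h (π a) ≤ (h (π b)).take (a + 1) := by
  induction b, hab using Nat.le_induction with
  | base => rw [List.take_of_length_le (by rw [length_profile hprof (hπ.inDag a), hπ.level])]
  | succ b hab ih =>
    refine ih.trans ?_
    have := List.take_le_take_of_le (profile_append_le_of_edge hprof (hπ.2.2 b)) (a + 1)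
    rwa [List.take_append_of_le_length
      (by rw [length_profile hprof (hπ.inDag b), hπ.level]; omega)] at this

lemma IsPath.exists_eventually_take_eq (hprof : A.IsProfileFun w h)
    (hπ : A.IsPath (A.Edge w) π) (t : ℕ) :
    ∃ P, ∀ᶠ j in atTop, (h (π j)).take (t + 1) = P := by
  set f : ℕ → List Bool := fun n => (h (π (n + t))).take (t + 1)
  have hf : Monotone f := monotone_nat_of_le_succ fun n => by
    simpa [f, List.take_take, Nat.add_right_comm n 1 t] using
      List.take_le_take_of_le (hπ.profile_le_take hprof (Nat.le_succ (n + t))) (t + 1)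
  have hfin : (Set.range f).Finite :=
    (List.finite_length_le Bool (t + 1)).subset (Set.range_subset_iff.2 fun n =>
      List.length_take_le _ _)
  obtain ⟨n, hn⟩ := hf.exists_forall_ge_eq_of_finite_range hfin
  refine ⟨f n, eventually_atTop.2 ⟨n + t, fun j hj => ?_⟩⟩
  obtain ⟨m, rfl⟩ : ∃ m, j = m + t := ⟨j - t, by omega⟩
  exact (hn m (by omega)).symm

lemma IsPath.eventually_alphaCount_eq [Finite Q] (hprof : A.IsProfileFun w h) {k : ℕ}
    {lam : Q × ℕ → Bool} (hlam : A.IsRetroLabeling w h k lam) (hπ : A.IsPath (A.Edge w) π) :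
    ∃ a, ∀ᶠ j in atTop, A.alphaCount w h lam (π j) = a := by
  set f : ℕ → ℕ := fun n => A.alphaCount w h lam (π (n + k))
  have hf : Antitone f := antitone_nat_of_succ_le fun n => by
    simpa [f, Nat.add_right_comm n 1 k] using
      alphaCount_le_of_edge hprof hlam (hπ.2.2 (n + k)) (by rw [hπ.level]; omega)
  obtain ⟨n, hn⟩ := WellFoundedLT.antitone_chain_condition hf
  refine ⟨f n, eventually_atTop.2 ⟨n + k, fun j hj => ?_⟩⟩
  obtain ⟨m, rfl⟩ : ∃ m, j = m + k := ⟨j - k, by omega⟩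
  exact (hn m (by omega)).symm

section Limit

variable {L : ℕ → List Bool}

lemma take_limit_eq (hL : ∀ t, ∀ᶠ j in atTop, (h (π j)).take (t + 1) = L t) {i j : ℕ}
    (hij : i ≤ j) : (L j).take (i + 1) = L i := by
  obtain ⟨j', hi, hj⟩ := ((hL i).and (hL j)).exists
  rw [← hi, ← hj, List.take_take, min_eq_left (by omega)]

lemma IsPath.exists_top_of_limit [Finite Q] (hprof : A.IsProfileFun w h)
    {lam : Q × ℕ → Bool} (hleg : A.Legal w h lam) (hπ : A.IsPath (A.Edge w) π)
    (hL : ∀ t, ∀ᶠ j in atTop, (h (π j)).take (t + 1) = L t) (i : ℕ) :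
    ∃ y, A.InDag w y ∧ y.2 = i ∧ h y = L i ∧ lam y = true := by
  obtain ⟨m, hm⟩ := eventually_atTop.1 ((hL i).and (eventually_ge_atTop i))
  choose u hu_dag hu_lev hu_prof hu_rtg using fun n =>
    exists_edge'_ancestor hprof (hπ.inDag (n + m)) (i := i)
      (by rw [hπ.level]; have := (hm (n + m) (by omega)).2; omega)
  obtain ⟨q, hq⟩ := Finite.exists_infinite_fiber fun n => (u n).1
  have hq' : (fun n => (u n).1) ⁻¹' {q} |>.Infinite := Set.infinite_coe_iff.1 hq
  have hu_eq : ∀ n ∈ (fun n => (u n).1) ⁻¹' {q}, u n = (q, i) := fun n hn =>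
    Prod.ext hn (hu_lev n)
  obtain ⟨n₀, hn₀⟩ := hq'.nonempty
  refine ⟨(q, i), hu_eq n₀ hn₀ ▸ hu_dag n₀, rfl, ?_, ?_⟩
  · rw [← hu_eq n₀ hn₀, hu_prof, (hm _ (by omega)).1]
  · -- `(q, i)` is a `G'`-ancestor of infinitely many nodes of the path, so it is not finite
    by_contra hq_bot
    refine (hq'.image (hπ.injective.comp (add_left_injective m)).injOn).mono ?_
      (hleg _ (hu_eq n₀ hn₀ ▸ hu_dag n₀) (by simpa using hq_bot))
    rintro _ ⟨n, hn, rfl⟩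
    exact hu_eq n hn ▸ hu_rtg n

lemma IsPath.eventually_profile_eq_limit [Finite Q] (hprof : A.IsProfileFun w h) {k : ℕ}
    {lam : Q × ℕ → Bool} (hlam : A.IsRetroLabeling w h k lam) (hleg : A.Legal w h lam)
    (hπ : A.IsPath (A.Edge w) π) (hL : ∀ t, ∀ᶠ j in atTop, (h (π j)).take (t + 1) = L t) :
    ∀ᶠ j in atTop, h (π j) = L j := by
  filter_upwards [hL (k + 1), eventually_gt_atTop k] with j hj hkj
  obtain ⟨j', hj', hjj'⟩ := ((hL j).and (eventually_ge_atTop j)).exists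
  have hlen : (L j).length = j + 1 := by
    rw [← hj', List.length_take, length_profile hprof (hπ.inDag j'), hπ.level]
    omega
  refine List.eq_of_le_of_take_eq (n := k + 1 + 1) ?_ ?_ ?_ fun i hi hki => ?_
  · exact hj' ▸ hπ.profile_le_take hprof hjj'
  · rw [hlen, length_profile hprof (hπ.inDag j), hπ.level]
  · rw [hj, take_limit_eq hL (by omega)]
  · obtain ⟨y, hy, hy_lev, hy_prof, hy_top⟩ := hπ.exists_top_of_limit hprof hleg hL i
    have : (L j)[i]? = some false := by
      rw [← List.getElem?_take_of_lt (Nat.lt_succ_self i), take_limit_eq hL (by omega), ← hy_prof,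
        ← hy_lev, profile_getElem?_level hprof hy, hlam.acc_eq_false hy (by omega) hy_top]
    exact Option.some_inj.1 ((List.getElem?_eq_getElem hi).symm.trans this)

lemma IsPath.eventually_lam_eq_true [Finite Q] (hprof : A.IsProfileFun w h) {k : ℕ}
    {lam : Q × ℕ → Bool} (hlam : A.IsRetroLabeling w h k lam) (hleg : A.Legal w h lam)
    (hπ : A.IsPath (A.Edge w) π) : ∀ᶠ j in atTop, lam (π j) = true := by
  choose L hL using hπ.exists_eventually_take_eq hprof
  filter_upwards [hπ.eventually_profile_eq_limit hprof hlam hleg hL] with j hj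
  obtain ⟨y, hy, hy_lev, hy_prof, hy_top⟩ := hπ.exists_top_of_limit hprof hleg hL j
  rw [← hy_top]
  exact hlam.eq_of_profile_eq hprof (hπ.inDag j) hy (by rw [hπ.level, hy_lev])
    (hj.trans hy_prof.symm)

end Limit

end Path

end NBW

/-- if `λ^k` is legal then `r^k` is an odd ranking: every infinite
initial path eventually stabilizes at an odd rank. -/
theorem stmt16 {Q σ : Type} [Fintype Q] (A : NBW Q σ) (w : ℕ → σ) (h : Q × ℕ → List Bool)
    (hprof : A.IsProfileFun w h) (k : ℕ) (lam : Q × ℕ → Bool)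
    (hlam : A.IsRetroLabeling w h k lam) (hleg : A.Legal w h lam) :
    ∀ π : ℕ → Q × ℕ, A.IsPath (A.Edge w) π →
      ∃ N, Odd (A.retroRank w h lam k (A.mBound) (π N)) ∧
        ∀ i, N ≤ i →
          A.retroRank w h lam k (A.mBound) (π i) =
          A.retroRank w h lam k (A.mBound) (π N) := by
  intro π hπ
  obtain ⟨a, ha⟩ := hπ.eventually_alphaCount_eq hprof hlam
  have hrank : ∀ᶠ i in Filter.atTop, A.retroRank w h lam k A.mBound (π i) = 2 * a + 1 := by
    filter_upwards [ha, hπ.eventually_lam_eq_true hprof hlam hleg, Filter.eventually_gt_atTop k]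
      with i hi_alpha hi_top hik
    simp [NBW.retroRank, hπ.level, hik.not_ge, hi_top, hi_alpha]
  obtain ⟨N, hN⟩ := Filter.eventually_atTop.1 hrank
  exact ⟨N, hN N le_rfl ▸ odd_two_mul_add_one a, fun i hi => (hN i hi).trans (hN N le_rfl).symm⟩
end

section
/- The k-retrospective ranking is tight from level k+1 onward: for every level l > k, every odd number less than the maximal rank occurring on level l also occurs as a rank on level l. -/
/-! On a level `l > k` the rank of `u` is `2 α(u) + 1` or `2 α(u)`, where `α(u)` counts the
⊤-profiles of level `l` lexicographically above `h u`; so every rank there is at most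
`2 · #(⊤-profiles) + 1`. In a finite linear order each `t` below the cardinality is the number of
elements above some element (the `(t+1)`-st largest), so the ⊤-nodes alone realise every odd
rank `2t + 1` below that bound. -/

theorem Finset.exists_card_filter_lt_eq {α : Type*} [LinearOrder α] {s : Finset α} {t : ℕ}
    (ht : t < s.card) : ∃ p ∈ s, {q ∈ s | p < q}.card = t := by
  classical
  induction t generalizing s with
  | zero =>
    have hs : s.Nonempty := Finset.card_pos.1 ht
    refine ⟨s.max' hs, s.max'_mem hs, Finset.card_eq_zero.2 ?_⟩
    exact Finset.filter_eq_empty_iff.2 fun q hq => not_lt.2 (s.le_max' q hq)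
  | succ t ih =>
    have hs : s.Nonempty := Finset.card_pos.1 (by omega)
    set m := s.max' hs
    have hm : m ∈ s := s.max'_mem hs
    obtain ⟨p, hp, hcount⟩ := ih (s := s.erase m) (by rw [Finset.card_erase_of_mem hm]; omega)
    obtain ⟨hpm, hps⟩ := Finset.mem_erase.1 hp
    have hm_above : m ∈ {q ∈ s | p < q} :=
      Finset.mem_filter.2 ⟨hm, lt_of_le_of_ne (s.le_max' p hps) hpm⟩
    refine ⟨p, hps, ?_⟩
    rw [Finset.filter_erase, Finset.card_erase_of_mem hm_above] at hcount
    have := Finset.card_pos.2 ⟨m, hm_above⟩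
    omega

theorem Set.Finite.exists_ncard_setOf_lt_eq {α : Type*} [LinearOrder α] {s : Set α}
    (hs : s.Finite) {t : ℕ} (ht : t < s.ncard) : ∃ p ∈ s, {q ∈ s | p < q}.ncard = t := by
  classical
  rw [Set.ncard_eq_toFinset_card s hs] at ht
  obtain ⟨p, hp, hcount⟩ := Finset.exists_card_filter_lt_eq ht
  refine ⟨p, hs.mem_toFinset.1 hp, ?_⟩
  rw [← hcount, ← Set.ncard_coe_finset, Finset.coe_filter]
  simp only [Set.Finite.mem_toFinset]

namespace NBW

variable {Q σ : Type} (A : NBW Q σ) (w : ℕ → σ) (h : Q × ℕ → List Bool) (lam : Q × ℕ → Bool)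

def topProfiles (l : ℕ) : Set (List Bool) :=
  {p | ∃ v, A.InDag w v ∧ v.2 = l ∧ lam v = true ∧ h v = p}

theorem topProfiles_finite [Finite Q] (l : ℕ) : (A.topProfiles w h lam l).Finite :=
  (Set.finite_range fun q : Q => h (q, l)).subset <| by
    rintro _ ⟨⟨q, _⟩, -, rfl, -, rfl⟩
    exact ⟨q, rfl⟩

theorem alphaCount_eq_ncard (u : Q × ℕ) :
    A.alphaCount w h lam u = {p ∈ A.topProfiles w h lam u.2 | h u < p}.ncard := by
  unfold alphaCount topProfiles
  congr 1
  ext p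
  exact ⟨fun ⟨v, hv, hvl, hlv, hvp, hlt⟩ => ⟨⟨v, hv, hvl, hlv, hvp⟩, hlt⟩,
    fun ⟨⟨v, hv, hvl, hlv, hvp⟩, hlt⟩ => ⟨v, hv, hvl, hlv, hvp, hlt⟩⟩

theorem retroRank_of_lt {k m : ℕ} {u : Q × ℕ} (hu : k < u.2) :
    A.retroRank w h lam k m u = 2 * A.alphaCount w h lam u + (lam u).toNat := by
  cases hl : lam u <;> simp [retroRank, hl, not_le.2 hu]

theorem alphaCount_le_ncard_topProfiles [Finite Q] (u : Q × ℕ) :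
    A.alphaCount w h lam u ≤ (A.topProfiles w h lam u.2).ncard := by
  rw [alphaCount_eq_ncard]
  exact Set.ncard_le_ncard (Set.sep_subset _ _) (A.topProfiles_finite w h lam u.2)

end NBW

theorem stmt17_general {Q σ : Type} [Fintype Q] (A : NBW Q σ) (w : ℕ → σ) (h : Q × ℕ → List Bool)
    (k : ℕ) (lam : Q × ℕ → Bool) :
    ∀ l, k < l → ∀ j, Odd j →
      (∃ v, A.InDag w v ∧ v.2 = l ∧ j < A.retroRank w h lam k (A.mBound) v) →
      ∃ v, A.InDag w v ∧ v.2 = l ∧ A.retroRank w h lam k (A.mBound) v = j := by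
  rintro l hkl _ ⟨t, rfl⟩ ⟨v, -, rfl, hv⟩
  have ht : t < (A.topProfiles w h lam v.2).ncard := by
    rw [A.retroRank_of_lt w h lam hkl] at hv
    have := A.alphaCount_le_ncard_topProfiles w h lam v
    have := (lam v).toNat_le
    omega
  obtain ⟨_, ⟨u, hu, hul, hlu, rfl⟩, hcount⟩ :=
    (A.topProfiles_finite w h lam _).exists_ncard_setOf_lt_eq ht
  refine ⟨u, hu, hul, ?_⟩
  rw [A.retroRank_of_lt w h lam (hul ▸ hkl), hlu, A.alphaCount_eq_ncard, hul, hcount]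
  rfl

/-- `r^k` is tight from level `k+1` on: on every level `l > k`,
every odd number below the maximal rank occurring on level `l` also occurs as a
rank on level `l`. -/
theorem stmt17 {Q σ : Type} [Fintype Q] (A : NBW Q σ) (w : ℕ → σ) (h : Q × ℕ → List Bool)
    (hprof : A.IsProfileFun w h) (k : ℕ) (lam : Q × ℕ → Bool)
    (hlam : A.IsRetroLabeling w h k lam) :
    ∀ l, k < l → ∀ j, Odd j →
      (∃ v, A.InDag w v ∧ v.2 = l ∧ j < A.retroRank w h lam k (A.mBound) v) →
      ∃ v, A.InDag w v ∧ v.2 = l ∧ A.retroRank w h lam k (A.mBound) v = j :=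
  stmt17_general A w h k lam
end
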